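/- arXiv:1409.1502 — 5 statements merged into one kernel-verified Lean document; each statement's English description precedes it below -/
import Mathlib

section
/- Let (L, [·,·], ρ) be a Lie–Rinehart algebra over R and ∇ : Der(R) × L → L a connection. Then the curvature of the basic connection on L is the basic curvature composed with the anchor: for all a₁, a₂, a₃ ∈ L, ∇ᵇᵃˢ_{a₁}∇ᵇᵃˢ_{a₂}a₃ − ∇ᵇᵃˢ_{a₂}∇ᵇᵃˢ_{a₁}a₃ − ∇ᵇᵃˢ_{[a₁,a₂]}a₃ = Rᵇᵃˢ_∇(a₁,a₂)(ρ(a₃)). -/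
/-- A Lie–Rinehart algebra over a commutative `ℝ`-algebra `R`: an `R`-module `L`
with an `ℝ`-bilinear Lie bracket and an `R`-linear anchor `ρ : L → Der(R)` which is a
morphism of Lie algebras and satisfies the Leibniz rule. -/
structure LieRinehart (R : Type*) [CommRing R] [Algebra ℝ R]
    (L : Type*) [AddCommGroup L] [Module R L] where
  bracket : L → L → L
  bracket_add_left : ∀ x y z : L, bracket (x + y) z = bracket x z + bracket y z
  bracket_add_right : ∀ x y z : L, bracket x (y + z) = bracket x y + bracket x z
  bracket_real_left : ∀ (r : ℝ) (x y : L),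
    bracket ((algebraMap ℝ R r) • x) y = (algebraMap ℝ R r) • bracket x y
  bracket_real_right : ∀ (r : ℝ) (x y : L),
    bracket x ((algebraMap ℝ R r) • y) = (algebraMap ℝ R r) • bracket x y
  bracket_antisymm : ∀ x y : L, bracket x y = - bracket y x
  bracket_jacobi : ∀ x y z : L,
    bracket x (bracket y z) = bracket (bracket x y) z + bracket y (bracket x z)
  anchor : L →ₗ[R] Derivation ℝ R R
  anchor_bracket : ∀ x y : L, anchor (bracket x y) = ⁅anchor x, anchor y⁆
  leibniz : ∀ (f : R) (x y : L),
    bracket x (f • y) = f • bracket x y + (anchor x f) • y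

/-- A connection on the `R`-module `E` along `Der(R)`. -/
structure DerConnection (R : Type*) [CommRing R] [Algebra ℝ R]
    (E : Type*) [AddCommGroup E] [Module R E] where
  conn : Derivation ℝ R R → E → E
  conn_add_left : ∀ (X Y : Derivation ℝ R R) (e : E), conn (X + Y) e = conn X e + conn Y e
  conn_add_right : ∀ (X : Derivation ℝ R R) (e e' : E), conn X (e + e') = conn X e + conn X e'
  conn_smul_left : ∀ (f : R) (X : Derivation ℝ R R) (e : E), conn (f • X) e = f • conn X e
  conn_leibniz : ∀ (f : R) (X : Derivation ℝ R R) (e : E),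
    conn X (f • e) = f • conn X e + (X f) • e

variable {R : Type*} [CommRing R] [Algebra ℝ R]
variable {L : Type*} [AddCommGroup L] [Module R L]

/-- The curvature `R_∇(X,Y)e = ∇_X ∇_Y e − ∇_Y ∇_X e − ∇_{[X,Y]} e` of a connection. -/
def DerConnection.curv {E : Type*} [AddCommGroup E] [Module R E]
    (N : DerConnection R E) (X Y : Derivation ℝ R R) (e : E) : E :=
  N.conn X (N.conn Y e) - N.conn Y (N.conn X e) - N.conn ⁅X, Y⁆ e

/-- The basic connection `∇ᵇᵃˢ : L × L → L`, `∇ᵇᵃˢ_a a' = [a,a'] + ∇_{ρ(a')} a`. -/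
def basL (LR : LieRinehart R L) (N : DerConnection R L) (a a' : L) : L :=
  LR.bracket a a' + N.conn (LR.anchor a') a

/-- The basic connection `∇ᵇᵃˢ : L × Der(R) → Der(R)`, `∇ᵇᵃˢ_a X = [ρ(a),X] + ρ(∇_X a)`. -/
def basD (LR : LieRinehart R L) (N : DerConnection R L) (a : L) (X : Derivation ℝ R R) :
    Derivation ℝ R R :=
  ⁅LR.anchor a, X⁆ + LR.anchor (N.conn X a)

/-- The basic curvature `Rᵇᵃˢ_∇ : L × L × Der(R) → L`. -/
def basCurv (LR : LieRinehart R L) (N : DerConnection R L) (a₁ a₂ : L)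
    (X : Derivation ℝ R R) : L :=
  - N.conn X (LR.bracket a₁ a₂) + LR.bracket (N.conn X a₁) a₂ + LR.bracket a₁ (N.conn X a₂)
    + N.conn (basD LR N a₂ X) a₁ - N.conn (basD LR N a₁ X) a₂

/-! The anchor intertwines the two basic connections, because it preserves brackets. Expanding
both sides of the identity with this, the triple brackets cancel by the Jacobi identity and what
remains is the basic curvature evaluated at `ρ(a₃)`. -/

theorem anchor_basL (LR : LieRinehart R L) (N : DerConnection R L) (a a' : L) :
    LR.anchor (basL LR N a a') = basD LR N a (LR.anchor a') := by
  rw [basL, basD, map_add, LR.anchor_bracket]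

theorem basL_basL (LR : LieRinehart R L) (N : DerConnection R L) (a a' a'' : L) :
    basL LR N a (basL LR N a' a'') =
      LR.bracket a (LR.bracket a' a'') + LR.bracket a (N.conn (LR.anchor a'') a')
        + N.conn (basD LR N a' (LR.anchor a'')) a := by
  rw [basL, anchor_basL, basL, LR.bracket_add_right]

/-- The curvature of the basic connection on `L` is the basic curvature
composed with the anchor. -/
theorem basic_connection_curvature_on_L
    (LR : LieRinehart R L) (N : DerConnection R L) :
    ∀ a₁ a₂ a₃ : L,
      basL LR N a₁ (basL LR N a₂ a₃) - basL LR N a₂ (basL LR N a₁ a₃)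
        - basL LR N (LR.bracket a₁ a₂) a₃
      = basCurv LR N a₁ a₂ (LR.anchor a₃) := by
  intro a₁ a₂ a₃
  rw [basL_basL, basL_basL, basL, basCurv, LR.bracket_jacobi a₁ a₂ a₃,
    LR.bracket_antisymm a₂ (N.conn (LR.anchor a₃) a₁)]
  abel
end

section
/- Let (L, [·,·], ρ) be a Lie–Rinehart algebra over R and ∇ : Der(R) × L → L a connection. Then the curvature of the basic connection on Der(R) is the anchor composed with the basic curvature: for all a₁, a₂ ∈ L and X ∈ Der(R), ∇ᵇᵃˢ_{a₁}∇ᵇᵃˢ_{a₂}X − ∇ᵇᵃˢ_{a₂}∇ᵇᵃˢ_{a₁}X − ∇ᵇᵃˢ_{[a₁,a₂]}X = ρ(Rᵇᵃˢ_∇(a₁,a₂)X). -/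
variable {R : Type*} [CommRing R] [Algebra ℝ R]
variable {L : Type*} [AddCommGroup L] [Module R L]

/-! Because the anchor is a Lie algebra morphism, `ρ (Rᵇᵃˢ_∇(a₁,a₂)X)` expands into brackets of
anchors. On the left-hand side the terms `[ρa₁,[ρa₂,X]] - [ρa₂,[ρa₁,X]] - [[ρa₁,ρa₂],X]` cancel by
the Jacobi identity in `Der(R)`, and the remaining terms match that expansion up to antisymmetry of the bracket. -/

section BasicCurvature

variable (LR : LieRinehart R L) (N : DerConnection R L)

theorem basD_basD (a b : L) (X : Derivation ℝ R R) :
    basD LR N a (basD LR N b X) =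
      ⁅LR.anchor a, ⁅LR.anchor b, X⁆⁆ + ⁅LR.anchor a, LR.anchor (N.conn X b)⁆
        + LR.anchor (N.conn (basD LR N b X) a) :=
  congrArg (· + _) (lie_add _ _ _)

theorem basD_bracket (a b : L) (X : Derivation ℝ R R) :
    basD LR N (LR.bracket a b) X =
      ⁅⁅LR.anchor a, LR.anchor b⁆, X⁆ + LR.anchor (N.conn X (LR.bracket a b)) := by
  rw [basD, LR.anchor_bracket]

theorem anchor_basCurv (a₁ a₂ : L) (X : Derivation ℝ R R) :
    LR.anchor (basCurv LR N a₁ a₂ X) =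
      - LR.anchor (N.conn X (LR.bracket a₁ a₂)) + ⁅LR.anchor (N.conn X a₁), LR.anchor a₂⁆
        + ⁅LR.anchor a₁, LR.anchor (N.conn X a₂)⁆ + LR.anchor (N.conn (basD LR N a₂ X) a₁)
        - LR.anchor (N.conn (basD LR N a₁ X) a₂) := by
  simp only [basCurv, map_add, map_sub, map_neg, LR.anchor_bracket]

end BasicCurvature

/-- The curvature of the basic connection on `Der(R)` is the anchor
composed with the basic curvature. -/
theorem basic_connection_curvature_on_Der
    (LR : LieRinehart R L) (N : DerConnection R L) :
    ∀ (a₁ a₂ : L) (X : Derivation ℝ R R),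
      basD LR N a₁ (basD LR N a₂ X) - basD LR N a₂ (basD LR N a₁ X)
        - basD LR N (LR.bracket a₁ a₂) X
      = LR.anchor (basCurv LR N a₁ a₂ X) := by
  intro a₁ a₂ X
  rw [basD_basD, basD_basD, basD_bracket, anchor_basCurv, lie_lie,
    ← lie_skew (LR.anchor a₂) (LR.anchor (N.conn X a₁))]
  abel
end

section
/- Let (L, [·,·], ρ) be a Lie–Rinehart algebra over R and ∇ : Der(R) × L → L a connection, with curvature R_∇. Then for all X ∈ Der(R) and a₁, a₂ ∈ L, ∇_X(∇ᵇᵃˢ_{a₁}a₂) − ∇ᵇᵃˢ_{a₁}(∇_X a₂) − ∇ᵇᵃˢ_{∇_X a₁}a₂ + ∇_{∇ᵇᵃˢ_{a₁}X}a₂ = R_∇(X, ρ(a₂))a₁ − Rᵇᵃˢ_∇(a₁,a₂)X. (This is the matched pair condition (M6) for the two 2-representations describing the tangent double of a Lie algebroid.) -/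
variable {R : Type*} [CommRing R] [Algebra ℝ R]
variable {L : Type*} [AddCommGroup L] [Module R L]

/-! Expanding `∇` additively in both arguments and using `∇_{[X,ρ(a₂)]} = −∇_{[ρ(a₂),X]}`,
the two sides of (M6) consist of the same terms, which cancel in pairs. -/

namespace DerConnection

variable {E : Type*} [AddCommGroup E] [Module R E]

theorem conn_neg_left (N : DerConnection R E) (X : Derivation ℝ R R) (e : E) :
    N.conn (-X) e = -N.conn X e := by
  rw [← neg_one_smul R X, N.conn_smul_left, neg_one_smul]

theorem conn_lie_swap (N : DerConnection R E) (X Y : Derivation ℝ R R) (e : E) :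
    N.conn ⁅X, Y⁆ e = -N.conn ⁅Y, X⁆ e := by
  rw [← lie_skew, conn_neg_left]

end DerConnection

/-- matched pair condition (M6) for the tangent double of a Lie algebroid. -/
theorem matched_pair_M6
    (LR : LieRinehart R L) (N : DerConnection R L) :
    ∀ (X : Derivation ℝ R R) (a₁ a₂ : L),
      N.conn X (basL LR N a₁ a₂) - basL LR N a₁ (N.conn X a₂)
        - basL LR N (N.conn X a₁) a₂ + N.conn (basD LR N a₁ X) a₂
      = N.curv X (LR.anchor a₂) a₁ - basCurv LR N a₁ a₂ X := by
  intro X a₁ a₂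
  simp only [basL, basD, basCurv, DerConnection.curv, N.conn_add_left, N.conn_add_right,
    N.conn_lie_swap X (LR.anchor a₂)]
  abel
end

section
/- Let (L, [·,·], ρ) be a Lie–Rinehart algebra over R and ∇ : Der(R) × L → L a connection, with curvature R_∇. Then for all a ∈ L and X₁, X₂ ∈ Der(R), −∇ᵇᵃˢ_a[X₁,X₂] + [∇ᵇᵃˢ_a X₁, X₂] + [X₁, ∇ᵇᵃˢ_a X₂] + ∇ᵇᵃˢ_{∇_{X₂}a}X₁ − ∇ᵇᵃˢ_{∇_{X₁}a}X₂ = ρ(R_∇(X₁,X₂)a). (This is the matched pair condition (M8) for the two 2-representations describing the tangent double of a Lie algebroid.) -/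
variable {R : Type*} [CommRing R] [Algebra ℝ R]
variable {L : Type*} [AddCommGroup L] [Module R L]

section DerivationDefect

variable {𝔤 : Type*} [LieRing 𝔤]

def derivationDefect (D : 𝔤 → 𝔤) (X₁ X₂ : 𝔤) : 𝔤 :=
  -D ⁅X₁, X₂⁆ + ⁅D X₁, X₂⁆ + ⁅X₁, D X₂⁆

theorem derivationDefect_add (D D' : 𝔤 → 𝔤) (X₁ X₂ : 𝔤) :
    derivationDefect (D + D') X₁ X₂ = derivationDefect D X₁ X₂ + derivationDefect D' X₁ X₂ := by
  simp only [derivationDefect, Pi.add_apply, lie_add, add_lie]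
  abel

theorem derivationDefect_lie_left (x X₁ X₂ : 𝔤) :
    derivationDefect (fun X => ⁅x, X⁆) X₁ X₂ = 0 := by
  rw [derivationDefect, leibniz_lie]
  abel

end DerivationDefect

/-- matched pair condition (M8) for the tangent double of a Lie algebroid. -/
theorem matched_pair_M8
    (LR : LieRinehart R L) (N : DerConnection R L) :
    ∀ (a : L) (X₁ X₂ : Derivation ℝ R R),
      - basD LR N a ⁅X₁, X₂⁆ + ⁅basD LR N a X₁, X₂⁆ + ⁅X₁, basD LR N a X₂⁆
        + basD LR N (N.conn X₂ a) X₁ - basD LR N (N.conn X₁ a) X₂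
      = LR.anchor (N.curv X₁ X₂ a) := by
  intro a X₁ X₂
  have hsplit : basD LR N a = (fun X => ⁅LR.anchor a, X⁆) + fun X => LR.anchor (N.conn X a) :=
    rfl
  calc _ = derivationDefect (basD LR N a) X₁ X₂
          + basD LR N (N.conn X₂ a) X₁ - basD LR N (N.conn X₁ a) X₂ := rfl
    _ = derivationDefect (fun X => LR.anchor (N.conn X a)) X₁ X₂
          + basD LR N (N.conn X₂ a) X₁ - basD LR N (N.conn X₁ a) X₂ := by
      rw [hsplit, derivationDefect_add, derivationDefect_lie_left, zero_add]
    _ = LR.anchor (N.curv X₁ X₂ a) := by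
      simp only [derivationDefect, basD, DerConnection.curv, map_sub]
      rw [← lie_skew X₁ (LR.anchor (N.conn X₂ a))]
      abel
end

section
/- Given a matched pair of 2-representations of the Lie–Rinehart algebras A and B on the module C, the map ∂_B : C → B intertwines the brackets: ∂_B(∇^{AC}_{∂_A c₁}c₂ − ∇^{BC}_{∂_B c₂}c₁) = [∂_B c₁, ∂_B c₂]_B for all c₁, c₂ ∈ C; together with condition (M1), ρ_B ∘ ∂_B = ρ_C, this says ∂_B is a morphism of Lie algebroids from the core Lie algebroid C to B. (Only the 2-representation identity ∂_B ∘ ∇^{AC}_a = ∇^{AB}_a ∘ ∂_B and condition (M4) are needed.) -/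
/-- An `L`-connection on an `R`-module `E`, for `L` a Lie–Rinehart algebra. -/
structure LRConnection (R : Type*) [CommRing R] [Algebra ℝ R]
    {A : Type*} [AddCommGroup A] [Module R A]
    (LA : LieRinehart R A)
    (E : Type*) [AddCommGroup E] [Module R E] where
  conn : A → E → E
  conn_add_left : ∀ (x y : A) (e : E), conn (x + y) e = conn x e + conn y e
  conn_add_right : ∀ (x : A) (e e' : E), conn x (e + e') = conn x e + conn x e'
  conn_smul_left : ∀ (f : R) (x : A) (e : E), conn (f • x) e = f • conn x e
  conn_leibniz : ∀ (f : R) (x : A) (e : E),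
    conn x (f • e) = f • conn x e + (LA.anchor x f) • e

/-- `∂_B` intertwines the core bracket
`[c₁,c₂]_C = ∇^{AC}_{∂_A c₁} c₂ − ∇^{BC}_{∂_B c₂} c₁` with the bracket of `B`;
only the 2-representation identity `∂_B ∘ ∇^{AC}_a = ∇^{AB}_a ∘ ∂_B` and the matched
pair condition (M4) are needed. -/
theorem dB_is_bracket_morphism
    {R : Type*} [CommRing R] [Algebra ℝ R]
    {A B C : Type*} [AddCommGroup A] [Module R A] [AddCommGroup B] [Module R B]
    [AddCommGroup C] [Module R C]
    (la : LieRinehart R A) (lb : LieRinehart R B)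
    (dA : C →ₗ[R] A) (dB : C →ₗ[R] B)
    (nAC : LRConnection R la C) (nAB : LRConnection R la B) (nBC : LRConnection R lb C)
    (hrep : ∀ (a : A) (c : C), dB (nAC.conn a c) = nAB.conn a (dB c))
    (hM4 : ∀ (b : B) (c : C),
      lb.bracket b (dB c) = dB (nBC.conn b c) - nAB.conn (dA c) b) :
    ∀ c₁ c₂ : C,
      dB (nAC.conn (dA c₁) c₂ - nBC.conn (dB c₂) c₁)
        = lb.bracket (dB c₁) (dB c₂) := by
  intro c₁ c₂
  calc dB (nAC.conn (dA c₁) c₂ - nBC.conn (dB c₂) c₁)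
      = nAB.conn (dA c₁) (dB c₂) - dB (nBC.conn (dB c₂) c₁) := by rw [map_sub, hrep]
    _ = -lb.bracket (dB c₂) (dB c₁) := by rw [hM4]; abel
    _ = lb.bracket (dB c₁) (dB c₂) := (lb.bracket_antisymm _ _).symm
end
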